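/- For any smooth symmetric trace-free tensor field u_{ij} on ℝ³, the tensor P(u)_{mℓ} := (1/2) ε_m^{ij} ∂_i ( Δ u_{jℓ} − 2 ∂_{(ℓ} ∂^n u_{j)n} + (1/2) δ_{jℓ} ∂^n ∂^k u_{nk} ) is symmetric, trace-free, and divergence-free: ∂^m P(u)_{mℓ} = 0, P(u)^m{}_m = 0, P(u)_{mℓ} = P(u)_{ℓm}. -/

import Mathlib

noncomputable section
open MeasureTheory Real

/-- Points of `ℝ³`. -/
abbrev V3 : Type := Fin 3 → ℝ

/-- Partial derivative `∂_i f` on `ℝ³`. -/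
def pd (i : Fin 3) (f : V3 → ℝ) (x : V3) : ℝ := fderiv ℝ f x (Pi.single i 1)

/-- The Levi-Civita symbol on three indices. -/
def eps (i j k : Fin 3) : ℝ :=
  ((((j : ℤ) - (i : ℤ)) * ((k : ℤ) - (j : ℤ)) * ((k : ℤ) - (i : ℤ))) / 2 : ℤ)

/-- The Euclidean Laplacian. -/
def lap (f : V3 → ℝ) (x : V3) : ℝ := ∑ i, pd i (pd i f) x

/-- The divergence `D^n u_{jn}` of a 2-tensor field on its second index. -/
def divT (u : V3 → Fin 3 → Fin 3 → ℝ) (j : Fin 3) (x : V3) : ℝ :=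
  ∑ n, pd n (fun y => u y j n) x

/-- The third-order operator
`P(u)_{mℓ} = (1/2) ε_m^{ij} ∂_i ( Δ u_{jℓ} − 2 ∂_{(ℓ} D^n u_{j)n} + (1/2) δ_{jℓ} D^n D^k u_{nk} )`
(the linearised Cotton–York operator). -/
def Pop (u : V3 → Fin 3 → Fin 3 → ℝ) (m l : Fin 3) (x : V3) : ℝ :=
  (1 / 2) * ∑ i, ∑ j, eps m i j *
    pd i (fun y =>
      lap (fun z => u z j l) y
        - (pd l (divT u j) y + pd j (divT u l) y)
        + (1 / 2) * (if j = l then (1 : ℝ) else 0) *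
            ∑ n, ∑ p, pd n (pd p (fun z => u z n p)) y) x

/-! ### Infrastructure -/

lemma contDiff_pd {f : V3 → ℝ} (hf : ContDiff ℝ (⊤ : ℕ∞) f) (i : Fin 3) : ContDiff ℝ (⊤ : ℕ∞) (pd i f) := by
  have h1 : ContDiff ℝ (⊤ : ℕ∞) (fderiv ℝ f) := hf.fderiv_right (by simp)
  exact (ContinuousLinearMap.apply ℝ ℝ (Pi.single i 1)).contDiff.comp h1

lemma pd_fun_add {f g : V3 → ℝ} {x : V3} (i : Fin 3) (hf : DifferentiableAt ℝ f x)
    (hg : DifferentiableAt ℝ g x) :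
    pd i (fun y => f y + g y) x = pd i f x + pd i g x := by
  simp [pd, fderiv_fun_add hf hg]

lemma pd_fun_sub {f g : V3 → ℝ} {x : V3} (i : Fin 3) (hf : DifferentiableAt ℝ f x)
    (hg : DifferentiableAt ℝ g x) :
    pd i (fun y => f y - g y) x = pd i f x - pd i g x := by
  simp [pd, fderiv_fun_sub hf hg]

lemma pd_const_mul {f : V3 → ℝ} {x : V3} (i : Fin 3) (c : ℝ) (hf : DifferentiableAt ℝ f x) :
    pd i (fun y => c * f y) x = c * pd i f x := by
  simp [pd, fderiv_const_mul hf c]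

lemma pd_sum {α : Type*} {s : Finset α} {f : α → V3 → ℝ} {x : V3} (i : Fin 3)
    (h : ∀ a ∈ s, DifferentiableAt ℝ (f a) x) :
    pd i (fun y => ∑ a ∈ s, f a y) x = ∑ a ∈ s, pd i (f a) x := by
  simp [pd, fderiv_fun_sum h]

lemma pd_comm {f : V3 → ℝ} (hf : ContDiff ℝ (⊤ : ℕ∞) f) (i j : Fin 3) (x : V3) :
    pd i (pd j f) x = pd j (pd i f) x := by
  have hd : ContDiff ℝ (⊤ : ℕ∞) (fderiv ℝ f) := hf.fderiv_right (by simp)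
  have key : ∀ v w : V3, fderiv ℝ (fun y => fderiv ℝ f y v) x w
      = fderiv ℝ (fderiv ℝ f) x w v := by
    intro v w
    have h : (fun y => fderiv ℝ f y v) = (ContinuousLinearMap.apply ℝ ℝ v) ∘ fderiv ℝ f := rfl
    rw [h, fderiv_comp x (ContinuousLinearMap.differentiableAt _)
      ((hd.differentiable (by simp)).differentiableAt)]
    simp
  have hsymm := ((hf.contDiffAt (x := x)).isSymmSndFDerivAt (by rw [minSmoothness_of_isRCLikeNormedField]; exact WithTop.coe_le_coe.mpr le_top)).eq
    (Pi.single j 1) (Pi.single i 1)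
  show fderiv ℝ (fun y => fderiv ℝ f y (Pi.single j 1)) x (Pi.single i 1)
      = fderiv ℝ (fun y => fderiv ℝ f y (Pi.single i 1)) x (Pi.single j 1)
  rw [key, key, hsymm]

lemma pd_comm3 {f : V3 → ℝ} (hf : ContDiff ℝ (⊤ : ℕ∞) f) (a b : Fin 3) (x : V3) :
    pd b (pd a (pd a f)) x = pd a (pd a (pd b f)) x := by
  rw [pd_comm (contDiff_pd hf a) b a x]
  have h2 : pd b (pd a f) = pd a (pd b f) := funext fun y => pd_comm hf b a y
  rw [h2]

/-! ### The inner tensor `F` -/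

def Fu (u : V3 → Fin 3 → Fin 3 → ℝ) (j l : Fin 3) : V3 → ℝ := fun y =>
  lap (fun z => u z j l) y
    - (pd l (divT u j) y + pd j (divT u l) y)
    + (1 / 2) * (if j = l then (1 : ℝ) else 0) *
        ∑ n, ∑ p, pd n (pd p (fun z => u z n p)) y

lemma Pop_eq (u : V3 → Fin 3 → Fin 3 → ℝ) (m l : Fin 3) (x : V3) :
    Pop u m l x = (1 / 2) * ∑ i, ∑ j, eps m i j * pd i (Fu u j l) x := rfl

def sf (u : V3 → Fin 3 → Fin 3 → ℝ) : V3 → ℝ := fun y =>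
  ∑ n, ∑ p, pd n (pd p (fun z => u z n p)) y

section Smooth
variable {u : V3 → Fin 3 → Fin 3 → ℝ} (hu : ∀ i j, ContDiff ℝ (⊤ : ℕ∞) fun x => u x i j)
include hu

lemma smooth_divT (j : Fin 3) : ContDiff ℝ (⊤ : ℕ∞) (divT u j) := by
  have h : divT u j = fun x => ∑ n, pd n (fun y => u y j n) x := rfl
  rw [h]
  exact ContDiff.sum fun n _ => contDiff_pd (hu j n) n

lemma smooth_lap (j l : Fin 3) : ContDiff ℝ (⊤ : ℕ∞) (lap (fun z => u z j l)) := by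
  have h : lap (fun z => u z j l) = fun x => ∑ i, pd i (pd i (fun z => u z j l)) x := rfl
  rw [h]
  exact ContDiff.sum fun i _ => contDiff_pd (contDiff_pd (hu j l) i) i

lemma smooth_sf : ContDiff ℝ (⊤ : ℕ∞) (sf u) := by
  exact ContDiff.sum fun n _ => ContDiff.sum fun p _ =>
    contDiff_pd (contDiff_pd (hu n p) p) n

lemma smooth_Fu (j l : Fin 3) : ContDiff ℝ (⊤ : ℕ∞) (Fu u j l) := by
  have h : Fu u j l = fun y =>
      (lap (fun z => u z j l) y - (pd l (divT u j) y + pd j (divT u l) y))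
        + ((1 / 2) * (if j = l then (1 : ℝ) else 0)) * sf u y := rfl
  rw [h]
  exact ((smooth_lap hu j l).sub ((contDiff_pd (smooth_divT hu j) l).add
    (contDiff_pd (smooth_divT hu l) j))).add (contDiff_const.mul (smooth_sf hu))

lemma pd_Fu (i k l : Fin 3) (x : V3) : pd i (Fu u k l) x =
    pd i (lap (fun z => u z k l)) x - pd i (pd l (divT u k)) x - pd i (pd k (divT u l)) x
      + (1 / 2) * (if k = l then (1 : ℝ) else 0) * pd i (sf u) x := by
  have hA := ((smooth_lap hu k l).differentiable (by simp)) x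
  have hB := ((contDiff_pd (smooth_divT hu k) l).differentiable (by simp)) x
  have hC := ((contDiff_pd (smooth_divT hu l) k).differentiable (by simp)) x
  have hS := ((smooth_sf hu).differentiable (by simp)) x
  have h : Fu u k l = fun y =>
      (lap (fun z => u z k l) y - (pd l (divT u k) y + pd k (divT u l) y))
        + ((1 / 2) * (if k = l then (1 : ℝ) else 0)) * sf u y := rfl
  rw [h, pd_fun_add i (hA.fun_sub (hB.fun_add hC)) (DifferentiableAt.const_mul hS _),
    pd_fun_sub i hA (hB.fun_add hC), pd_fun_add i hB hC, pd_const_mul i _ hS]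
  ring

end Smooth
section Core
variable {u : V3 → Fin 3 → Fin 3 → ℝ} (hu : ∀ i j, ContDiff ℝ (⊤ : ℕ∞) fun x => u x i j)
include hu

lemma pd_Pop (m m' l : Fin 3) (x : V3) :
    pd m (fun y => Pop u m' l y) x
      = (1 / 2) * ∑ i, ∑ j, eps m' i j * pd m (pd i (Fu u j l)) x := by
  have hFd : ∀ i j l', DifferentiableAt ℝ (fun y => eps m' i j * pd i (Fu u j l') y) x :=
    fun i j l' => DifferentiableAt.const_mul
      (((contDiff_pd (smooth_Fu hu j l') i).differentiable (by simp)) x) _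
  have h : (fun y => Pop u m' l y)
      = fun y => (1 / 2 : ℝ) * ∑ i, ∑ j, eps m' i j * pd i (Fu u j l) y := rfl
  rw [h, pd_const_mul m _ ?_]
  · rw [pd_sum m ?_]
    · congr 1
      refine Finset.sum_congr rfl fun i _ => ?_
      rw [pd_sum m fun j _ => hFd i j l]
      refine Finset.sum_congr rfl fun j _ => ?_
      have h2 : (fun y => eps m' i j * pd i (Fu u j l) y)
          = fun y => eps m' i j * (pd i (Fu u j l)) y := rfl
      rw [h2, pd_const_mul m _ (((contDiff_pd (smooth_Fu hu j l) i).differentiable (by simp)) x)]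
    · exact fun i _ => DifferentiableAt.fun_sum fun j _ => hFd i j l
  · exact DifferentiableAt.fun_sum fun i _ => DifferentiableAt.fun_sum fun j _ => hFd i j l

lemma sum_pd_k_sf (k : Fin 3) (x : V3) :
    ∑ b, ∑ n, pd k (pd b (pd n (fun z => u z b n))) x = pd k (sf u) x := by
  have h : sf u = fun y => ∑ b, ∑ n, pd b (pd n (fun z => u z b n)) y := rfl
  rw [h, pd_sum k fun b _ => (DifferentiableAt.fun_sum fun n _ =>
    ((contDiff_pd (contDiff_pd (hu b n) n) b).differentiable (by simp)) x)]
  refine Finset.sum_congr rfl fun b _ => ?_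
  rw [pd_sum k fun n _ => ((contDiff_pd (contDiff_pd (hu b n) n) b).differentiable (by simp)) x]

lemma pd_lap_expand (i k l : Fin 3) (x : V3) :
    pd i (lap (fun z => u z k l)) x = ∑ a, pd i (pd a (pd a (fun z => u z k l))) x := by
  have h : lap (fun z => u z k l) = fun y => ∑ a, pd a (pd a (fun z => u z k l)) y := rfl
  rw [h, pd_sum i fun a _ =>
    ((contDiff_pd (contDiff_pd (hu k l) a) a).differentiable (by simp)) x]

lemma pd_pd_divT_expand (i b k : Fin 3) (x : V3) :
    pd i (pd b (divT u k)) x = ∑ n, pd i (pd b (pd n (fun z => u z k n))) x := by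
  have h : pd b (divT u k) = fun y => ∑ n, pd b (pd n (fun z => u z k n)) y :=
    funext fun y => pd_sum b fun n _ =>
      ((contDiff_pd (hu k n) n).differentiable (by simp)) y
  rw [h, pd_sum i fun n _ =>
    ((contDiff_pd (contDiff_pd (hu k n) n) b).differentiable (by simp)) x]

end Core
section Core2
variable {u : V3 → Fin 3 → Fin 3 → ℝ} (hu : ∀ i j, ContDiff ℝ (⊤ : ℕ∞) fun x => u x i j)

lemma Fsym (hsym : ∀ x i j, u x i j = u x j i) (j l : Fin 3) : Fu u j l = Fu u l j := by
  funext y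
  unfold Fu
  have hc : (fun z => u z j l) = fun z => u z l j := funext fun z => hsym z j l
  have hite : (if j = l then (1 : ℝ) else 0) = if l = j then 1 else 0 := by
    by_cases h : j = l
    · simp [h]
    · simp [h, Ne.symm h]
  rw [hc, hite]
  ring

include hu

lemma Bdiv (htr : ∀ x, ∑ i, u x i i = 0) (k : Fin 3) (x : V3) :
    ∑ b, pd b (Fu u k b) x = ∑ j, pd k (Fu u j j) x := by
  have h0 : (fun z => ∑ j, u z j j) = fun _ => (0 : ℝ) := funext fun z => htr z
  -- LHS pieces
  have T12 : ∑ b, pd b (lap (fun z => u z k b)) x = ∑ b, pd b (pd b (divT u k)) x := by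
    have h1 : ∀ b, pd b (lap (fun z => u z k b)) x
        = ∑ a, pd a (pd a (pd b (fun z => u z k b))) x := by
      intro b
      rw [pd_lap_expand hu b k b x]
      exact Finset.sum_congr rfl fun a _ => pd_comm3 (hu k b) a b x
    have h2 : ∀ b, pd b (pd b (divT u k)) x
        = ∑ n, pd b (pd b (pd n (fun z => u z k n))) x := fun b =>
      pd_pd_divT_expand hu b b k x
    simp only [h1, h2]
    rw [Finset.sum_comm]
  have T3 : ∑ b, pd b (pd k (divT u b)) x = pd k (sf u) x := by
    have h3 : ∀ b, pd b (pd k (divT u b)) x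
        = ∑ n, pd k (pd b (pd n (fun z => u z b n))) x := by
      intro b
      rw [pd_pd_divT_expand hu b k b x]
      exact Finset.sum_congr rfl fun n _ => pd_comm (contDiff_pd (hu b n) n) b k x
    simp only [h3]
    exact sum_pd_k_sf hu k x
  have T4 : ∑ b, (1 / 2) * (if k = b then (1 : ℝ) else 0) * pd b (sf u) x
      = (1 / 2) * pd k (sf u) x := by
    have h4 : ∀ b, (1 / 2) * (if k = b then (1 : ℝ) else 0) * pd b (sf u) x
        = if k = b then (1 / 2) * pd b (sf u) x else 0 := by
      intro b; by_cases h : k = b <;> simp [h]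
    simp only [h4, Finset.sum_ite_eq, Finset.mem_univ, if_true]
  -- RHS pieces
  have R1 : ∑ j, pd k (lap (fun z => u z j j)) x = 0 := by
    have h5 : ∀ j, pd k (lap (fun z => u z j j)) x
        = ∑ a, pd k (pd a (pd a (fun z => u z j j))) x := fun j => pd_lap_expand hu k j j x
    simp only [h5]
    rw [Finset.sum_comm]
    refine Finset.sum_eq_zero fun a _ => ?_
    have e1 : (fun y => ∑ j, pd a (fun z => u z j j) y) = fun _ => (0 : ℝ) := by
      funext y
      rw [← pd_sum a fun j _ => ((hu j j).differentiable (by simp)) y, h0]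
      simp [pd]
    have e2 : (fun y => ∑ j, pd a (pd a (fun z => u z j j)) y) = fun _ => (0 : ℝ) := by
      funext y
      rw [← pd_sum a fun j _ => ((contDiff_pd (hu j j) a).differentiable (by simp)) y, e1]
      simp [pd]
    rw [← pd_sum k fun j _ =>
      ((contDiff_pd (contDiff_pd (hu j j) a) a).differentiable (by simp)) x, e2]
    simp [pd]
  have R2 : ∑ j, pd k (pd j (divT u j)) x = pd k (sf u) x := by
    have h6 : ∀ j, pd k (pd j (divT u j)) x
        = ∑ n, pd k (pd j (pd n (fun z => u z j n))) x := fun j =>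
      pd_pd_divT_expand hu k j j x
    simp only [h6]
    exact sum_pd_k_sf hu k x
  -- assemble
  have L : ∑ b, pd b (Fu u k b) x
      = (∑ b, pd b (lap (fun z => u z k b)) x) - (∑ b, pd b (pd b (divT u k)) x)
        - (∑ b, pd b (pd k (divT u b)) x)
        + (∑ b, (1 / 2) * (if k = b then (1 : ℝ) else 0) * pd b (sf u) x) := by
    rw [show (∑ b, pd b (Fu u k b) x)
        = ∑ b : Fin 3, (pd b (lap (fun z => u z k b)) x - pd b (pd b (divT u k)) x
          - pd b (pd k (divT u b)) x
          + (1 / 2) * (if k = b then (1 : ℝ) else 0) * pd b (sf u) x) from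
      Finset.sum_congr rfl fun b _ => pd_Fu hu b k b x]
    rw [Finset.sum_add_distrib, Finset.sum_sub_distrib, Finset.sum_sub_distrib]
  have R : ∑ j, pd k (Fu u j j) x
      = (∑ j, pd k (lap (fun z => u z j j)) x) - (∑ j, pd k (pd j (divT u j)) x)
        - (∑ j, pd k (pd j (divT u j)) x)
        + (∑ j : Fin 3, (1 / 2) * (if j = j then (1 : ℝ) else 0) * pd k (sf u) x) := by
    rw [show (∑ j, pd k (Fu u j j) x)
        = ∑ j : Fin 3, (pd k (lap (fun z => u z j j)) x - pd k (pd j (divT u j)) x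
          - pd k (pd j (divT u j)) x
          + (1 / 2) * (if j = j then (1 : ℝ) else 0) * pd k (sf u) x) from
      Finset.sum_congr rfl fun j _ => pd_Fu hu k j j x]
    rw [Finset.sum_add_distrib, Finset.sum_sub_distrib, Finset.sum_sub_distrib]
  rw [L, R, T12, T3, T4, R1, R2]
  simp only [if_true, eq_self_iff_true, Finset.sum_const, Finset.card_univ,
    Fintype.card_fin, nsmul_eq_mul]
  ring

end Core2
lemma eps_000 : eps 0 0 0 = 0 := by norm_num [eps]
lemma eps_001 : eps 0 0 1 = 0 := by norm_num [eps]
lemma eps_002 : eps 0 0 2 = 0 := by norm_num [eps]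
lemma eps_010 : eps 0 1 0 = 0 := by norm_num [eps]
lemma eps_011 : eps 0 1 1 = 0 := by norm_num [eps]
lemma eps_012 : eps 0 1 2 = 1 := by norm_num [eps]
lemma eps_020 : eps 0 2 0 = 0 := by norm_num [eps]
lemma eps_021 : eps 0 2 1 = -1 := by norm_num [eps]
lemma eps_022 : eps 0 2 2 = 0 := by norm_num [eps]
lemma eps_100 : eps 1 0 0 = 0 := by norm_num [eps]
lemma eps_101 : eps 1 0 1 = 0 := by norm_num [eps]
lemma eps_102 : eps 1 0 2 = -1 := by norm_num [eps]
lemma eps_110 : eps 1 1 0 = 0 := by norm_num [eps]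
lemma eps_111 : eps 1 1 1 = 0 := by norm_num [eps]
lemma eps_112 : eps 1 1 2 = 0 := by norm_num [eps]
lemma eps_120 : eps 1 2 0 = 1 := by norm_num [eps]
lemma eps_121 : eps 1 2 1 = 0 := by norm_num [eps]
lemma eps_122 : eps 1 2 2 = 0 := by norm_num [eps]
lemma eps_200 : eps 2 0 0 = 0 := by norm_num [eps]
lemma eps_201 : eps 2 0 1 = 1 := by norm_num [eps]
lemma eps_202 : eps 2 0 2 = 0 := by norm_num [eps]
lemma eps_210 : eps 2 1 0 = -1 := by norm_num [eps]
lemma eps_211 : eps 2 1 1 = 0 := by norm_num [eps]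
lemma eps_212 : eps 2 1 2 = 0 := by norm_num [eps]
lemma eps_220 : eps 2 2 0 = 0 := by norm_num [eps]
lemma eps_221 : eps 2 2 1 = 0 := by norm_num [eps]
lemma eps_222 : eps 2 2 2 = 0 := by norm_num [eps]

/-- for any smooth symmetric trace-free `u`, `P(u)` is symmetric, trace-free and
divergence-free (transverse). -/
theorem Pop_symm_tracefree_transverse (u : V3 → Fin 3 → Fin 3 → ℝ)
    (hsmooth : ∀ i j, ContDiff ℝ (⊤ : ℕ∞) fun x => u x i j)
    (hsym : ∀ x i j, u x i j = u x j i)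
    (htraceless : ∀ x, ∑ i, u x i i = 0) :
    (∀ x m l, Pop u m l x = Pop u l m x) ∧
    (∀ x, ∑ m, Pop u m m x = 0) ∧
    (∀ l x, ∑ m, pd m (fun y => Pop u m l y) x = 0) := by
  refine ⟨?_, ?_, ?_⟩
  · -- symmetry
    intro x m l
    have hB : ∀ k : Fin 3, pd 0 (Fu u k 0) x + pd 1 (Fu u k 1) x + pd 2 (Fu u k 2) x
        = pd k (Fu u 0 0) x + pd k (Fu u 1 1) x + pd k (Fu u 2 2) x := fun k => by
      simpa [Fin.sum_univ_three] using Bdiv hsmooth htraceless k x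
    rw [Pop_eq, Pop_eq]
    fin_cases m <;> fin_cases l <;>
      simp only [Fin.sum_univ_three, Fin.isValue, Fin.mk_zero, Fin.mk_one, Fin.reduceFinMk,
        eps_000, eps_001, eps_002, eps_010, eps_011, eps_012, eps_020, eps_021, eps_022, eps_100, eps_101, eps_102, eps_110, eps_111, eps_112, eps_120, eps_121, eps_122, eps_200, eps_201, eps_202, eps_210, eps_211, eps_212, eps_220, eps_221, eps_222,
        zero_mul, mul_zero, one_mul, mul_one, neg_mul, add_zero, zero_add, neg_neg] <;>
      linarith [hB 0, hB 1, hB 2]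
  · -- trace-free
    intro x
    have hFs : ∀ i j l' : Fin 3, pd i (Fu u j l') x = pd i (Fu u l' j) x := fun i j l' => by
      rw [Fsym hsym j l']
    simp only [Pop_eq, Fin.sum_univ_three,
        eps_000, eps_001, eps_002, eps_010, eps_011, eps_012, eps_020, eps_021, eps_022, eps_100, eps_101, eps_102, eps_110, eps_111, eps_112, eps_120, eps_121, eps_122, eps_200, eps_201, eps_202, eps_210, eps_211, eps_212, eps_220, eps_221, eps_222,
        zero_mul, mul_zero, one_mul, mul_one, neg_mul, add_zero, zero_add, neg_neg]
    linarith [hFs 0 1 2, hFs 0 2 1, hFs 1 0 2, hFs 1 2 0, hFs 2 0 1, hFs 2 1 0]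
  · -- transverse
    intro l x
    have hcomm : ∀ m i j : Fin 3, pd m (pd i (Fu u j l)) x = pd i (pd m (Fu u j l)) x :=
      fun m i j => pd_comm (smooth_Fu hsmooth j l) m i x
    simp only [pd_Pop hsmooth, Fin.sum_univ_three,
        eps_000, eps_001, eps_002, eps_010, eps_011, eps_012, eps_020, eps_021, eps_022, eps_100, eps_101, eps_102, eps_110, eps_111, eps_112, eps_120, eps_121, eps_122, eps_200, eps_201, eps_202, eps_210, eps_211, eps_212, eps_220, eps_221, eps_222,
        zero_mul, mul_zero, one_mul, mul_one, neg_mul, add_zero, zero_add, neg_neg]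
    linarith [hcomm 0 1 2, hcomm 0 2 1, hcomm 1 2 0, hcomm 1 0 2, hcomm 2 0 1, hcomm 2 1 0]
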